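/- Let G be a finite group, k ≥ 3 an integer, and Θ a finite group acting on G by automorphisms, and let G⋊Θ denote the semidirect product with multiplication (g₁,θ₁)(g₂,θ₂) = (g₁·θ₁(g₂), θ₁θ₂). For ḡ = (g₁,…,g_{k−1}) ∈ G^{k−1}, set U(ḡ) := Σ_{θ∈Θ} Σ_{γ̄∈Θ^{k−1}} S((θ(g₁),γ₁),…,(θ(g_{k−1}),γ_{k−1})) in A_k(G⋊Θ). Then for all ḡ, h̄ ∈ G^{k−1}: U(ḡ)·U(h̄) = |G|^{(⌈k/2⌉−1)/2} · |Θ|^{(⌈k/2⌉−1)/2} · |Θ|^{⌊k/2⌋} · Σ_{θ″∈Θ} (∏_{i=2}^{⌈k/2⌉} δ(h₁·θ″(g_{k+1−i}), h_i)) · U(h₁θ″(g₁), h₁θ″(g₂), …, h₁θ″(g_{⌈k/2⌉}), h_{⌈k/2⌉+1}, …, h_{k−1}). -/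

import Mathlib

/-
Expanding both factors, `U(ḡ)·U(h̄)` is a sum of basis products `S(x̄)·S(ȳ)` with
`x̄ = (θ(g_j), γ_j)` and `ȳ = (θ'(h_j), γ'_j)`. In `G ⋊ Θ` such a product splits into a `G`-part,
which depends on `θ` only through `θ'' = θ'⁻¹ γ'₁ θ`, and a `Θ`-part, which is the product
`S(γ̄)·S(γ̄')` of `A_k(Θ)` up to its constant. Summed over all `γ̄, γ̄'`, the `Θ`-parts give
`|Θ|^⌊k/2⌋` times the sum of all basis vectors: after translating `γ̄` by `γ'₁`, exchanging the
first `⌈k/2⌉` coordinates of `γ̄` and `γ̄'` is an involution which turns the constraints into a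
system determining `γ'₂, …, γ'_⌈k/2⌉` from the `⌊k/2⌋` coordinates of `γ̄'` not among them.
-/

open Finset

noncomputable section

/-- 1-indexed access into a `(k-1)`-tuple, with default value `1` out of range. -/
def idx1 {H : Type*} [One H] (k : ℕ) (v : Fin (k - 1) → H) (j : ℕ) : H :=
  if h : j - 1 < k - 1 then v ⟨j - 1, h⟩ else 1

/-- The product of two basis vectors `S(x̄)·S(ȳ)` of the `k`-box space `A_k(H)` of the
group planar algebra `P(H)` (Fact 4.4 of the paper). -/
def basisMul {H : Type*} [Group H] [Fintype H] [DecidableEq H] (k : ℕ)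
    (x y : Fin (k - 1) → H) : (Fin (k - 1) → H) →₀ ℂ :=
  ((((Fintype.card H : ℝ) ^ (((((k + 1) / 2 : ℕ) : ℝ) - 1) / 2) : ℝ) : ℂ) *
      ∏ i ∈ Finset.Icc 2 ((k + 1) / 2),
        (if idx1 k y 1 * idx1 k x (k + 1 - i) = idx1 k y i then (1 : ℂ) else 0)) •
    Finsupp.single
      (fun j : Fin (k - 1) =>
        if (j : ℕ) + 1 ≤ (k + 1) / 2 then idx1 k y 1 * x j else y j) (1 : ℂ)

/-- The bilinear product on the `k`-box space `A_k(H) = ℂ[H^{k−1}]`. -/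
def mulAk {H : Type*} [Group H] [Fintype H] [DecidableEq H] (k : ℕ)
    (a b : (Fin (k - 1) → H) →₀ ℂ) : (Fin (k - 1) → H) →₀ ℂ :=
  a.sum fun x ca => b.sum fun y cb => (ca * cb) • basisMul k x y

theorem sum_prod_ite_eq_card_pow {ι Γ R : Type*} [Fintype ι] [DecidableEq ι] [Fintype Γ]
    [DecidableEq Γ] [Nonempty Γ] [CommSemiring R] (S : Finset ι) (v : (ι → Γ) → ι → Γ)
    (hv : ∀ x y, (∀ j ∉ S, x j = y j) → ∀ i ∈ S, v x i = v y i) :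
    ∑ x, ∏ i ∈ S, (if x i = v x i then (1 : R) else 0) =
      (Fintype.card Γ : R) ^ (Fintype.card ι - #S) := by
  let extend (z : {j // j ∉ S} → Γ) : ι → Γ :=
    let x₀ : ι → Γ := fun j => if h : j ∈ S then Classical.arbitrary Γ else z ⟨j, h⟩
    fun j => if j ∈ S then v x₀ j else x₀ j
  have hsol : #{x | ∀ i ∈ S, x i = v x i} = Fintype.card ({j // j ∉ S} → Γ) := by
    rw [← Finset.card_univ]
    refine card_nbij' (fun x j => x j) extend (fun _ _ => mem_univ _) ?_ ?_ ?_
    · intro z _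
      simp only [coe_filter, mem_univ, true_and, Set.mem_ofPred_eq]
      intro i hi
      simp only [extend, if_pos hi]
      exact hv _ _ (fun j hj => by simp [hj]) i hi
    · intro x hx
      simp only [coe_filter, mem_univ, true_and, Set.mem_ofPred_eq] at hx
      funext j
      by_cases hj : j ∈ S
      · simp only [extend, if_pos hj]
        rw [hx j hj]
        exact hv _ _ (fun j' hj' => by simp [hj']) j hj
      · simp [extend, hj]
    · intro z _
      funext j
      simp [extend, j.2]
  rw [Fintype.card_fun, Fintype.card_subtype_compl, Fintype.card_coe] at hsol
  simp only [prod_boole]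
  -- `congr!` reconciles the two `Decidable` instances of `∀ i ∈ S, x i = v x i` that arise
  convert (sum_boole _ _).trans (congrArg (Nat.cast (R := R)) hsol) using 1
  · congr!
  · norm_cast

theorem map_filter_fin_succ_mem {n : ℕ} {T : Finset ℕ} (hT : T ⊆ Icc 1 n) :
    (univ.filter fun j : Fin n => (j : ℕ) + 1 ∈ T).map
      (Fin.valEmbedding.trans (addRightEmbedding 1)) = T := by
  ext i
  simp only [mem_map, mem_filter, mem_univ, true_and, Function.Embedding.trans_apply,
    Fin.valEmbedding_apply, addRightEmbedding_apply]
  constructor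
  · rintro ⟨j, hj, rfl⟩
    exact hj
  · intro hi
    have := mem_Icc.mp (hT hi)
    exact ⟨⟨i - 1, by omega⟩, by simpa [Nat.sub_add_cancel this.1] using hi,
      Nat.sub_add_cancel this.1⟩

def basisMulConst (k : ℕ) (H : Type*) [Fintype H] : ℂ :=
  (((Fintype.card H : ℝ) ^ (((((k + 1) / 2 : ℕ) : ℝ) - 1) / 2) : ℝ) : ℂ)

section Tuples

variable {H : Type*} (k : ℕ)

theorem idx1_of_le [One H] (v : Fin (k - 1) → H) {n : ℕ} (h1 : 1 ≤ n) (h2 : n ≤ k - 1) :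
    idx1 k v n = v ⟨n - 1, by omega⟩ :=
  dif_pos _

theorem idx1_map {H' : Type*} [One H] [One H'] (F : H → H') (hF : F 1 = 1)
    (v : Fin (k - 1) → H) (n : ℕ) : idx1 k (fun j => F (v j)) n = F (idx1 k v n) := by
  unfold idx1; split_ifs <;> simp [hF]

theorem idx1_map₂ {H' H'' : Type*} [One H] [One H'] [One H''] (F : H → H' → H'')
    (hF : F 1 1 = 1) (u : Fin (k - 1) → H) (w : Fin (k - 1) → H') (n : ℕ) :
    idx1 k (fun j => F (u j) (w j)) n = F (idx1 k u n) (idx1 k w n) := by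
  unfold idx1; split_ifs <;> simp [hF]

def splice (x y : Fin (k - 1) → H) : Fin (k - 1) → H :=
  fun j => if (j : ℕ) + 1 ≤ (k + 1) / 2 then x j else y j

theorem splice_splice (x y : Fin (k - 1) → H) :
    splice k (splice k x y) (splice k y x) = x := by
  funext j; unfold splice; split_ifs <;> rfl

def mirrorCoeff [One H] [DecidableEq H] (x y : Fin (k - 1) → H) : ℂ :=
  ∏ i ∈ Icc 2 ((k + 1) / 2), if idx1 k x (k + 1 - i) = idx1 k y i then 1 else 0

def mulCoeff [Mul H] [One H] [DecidableEq H] (x y : Fin (k - 1) → H) : ℂ :=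
  ∏ i ∈ Icc 2 ((k + 1) / 2), if idx1 k y 1 * idx1 k x (k + 1 - i) = idx1 k y i then 1 else 0

theorem basisMul_eq [Group H] [Fintype H] [DecidableEq H] (x y : Fin (k - 1) → H) :
    basisMul k x y = (basisMulConst k H * mulCoeff k x y) •
      Finsupp.single (splice k (fun j => idx1 k y 1 * x j) y) 1 :=
  rfl

theorem mulCoeff_eq_mirrorCoeff [Mul H] [One H] [DecidableEq H] (x y : Fin (k - 1) → H) :
    mulCoeff k x y = mirrorCoeff k (fun j => idx1 k y 1 * x j) y := by
  refine prod_congr rfl fun i hi => ?_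
  have hi := mem_Icc.mp hi
  rw [idx1_of_le k x (n := k + 1 - i) (by omega) (by omega),
    idx1_of_le k (fun j => idx1 k y 1 * x j) (n := k + 1 - i) (by omega) (by omega)]

end Tuples

section Counting

variable {Γ : Type*} [Fintype Γ] [DecidableEq Γ] (k : ℕ)

theorem sum_mirrorCoeff_splice [One Γ] (x : Fin (k - 1) → Γ) :
    ∑ y, mirrorCoeff k (splice k x y) (splice k y x) = (Fintype.card Γ : ℂ) ^ (k / 2) := by
  set S := univ.filter fun j : Fin (k - 1) => (j : ℕ) + 1 ∈ Icc 2 ((k + 1) / 2)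
  have hS : S.map (Fin.valEmbedding.trans (addRightEmbedding 1)) = Icc 2 ((k + 1) / 2) :=
    map_filter_fin_succ_mem fun i hi => by simp only [mem_Icc] at hi ⊢; omega
  have hmemS : ∀ j, j ∈ S ↔ 2 ≤ (j : ℕ) + 1 ∧ (j : ℕ) + 1 ≤ (k + 1) / 2 := by simp [S]
  let v (y : Fin (k - 1) → Γ) (j : Fin (k - 1)) : Γ := idx1 k (splice k x y) (k + 1 - (j + 1))
  have hv : ∀ y y', (∀ j ∉ S, y j = y' j) → ∀ i ∈ S, v y i = v y' i := by
    intro y y' hyy' i hi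
    rw [hmemS] at hi
    simp only [v, idx1, splice]
    split_ifs with hlt hle
    · rfl
    · exact hyy' _ fun hmem => hle ((hmemS _).mp hmem).2
    · rfl
  calc ∑ y, mirrorCoeff k (splice k x y) (splice k y x)
      = ∑ y, ∏ j ∈ S, (if y j = v y j then (1 : ℂ) else 0) := by
        refine sum_congr rfl fun y _ => ?_
        rw [mirrorCoeff, ← hS, prod_map]
        refine prod_congr rfl fun j hj => ?_
        rw [hmemS] at hj
        simp only [Function.Embedding.trans_apply, Fin.valEmbedding_apply,
          addRightEmbedding_apply, idx1_of_le k (splice k y x) (n := j + 1) (by omega) (by omega),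
          Nat.add_sub_cancel, splice, if_pos hj.2, Fin.eta, eq_comm, v]
    _ = (Fintype.card Γ : ℂ) ^ (k / 2) := by
        rw [sum_prod_ite_eq_card_pow S v hv, ← card_map, hS, Nat.card_Icc, Fintype.card_fin]
        congr 1
        omega

theorem sum_sum_mulCoeff_smul [Group Γ] {M : Type*} [AddCommMonoid M] [Module ℂ M]
    (F : (Fin (k - 1) → Γ) → M) :
    ∑ x, ∑ y, mulCoeff k x y • F (splice k (fun j => idx1 k y 1 * x j) y) =
      ((Fintype.card Γ : ℂ) ^ (k / 2)) • ∑ z, F z := by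
  let swapHalves : Function.End ((Fin (k - 1) → Γ) × (Fin (k - 1) → Γ)) :=
    fun p => (splice k p.2 p.1, splice k p.1 p.2)
  have hswap : Function.Involutive swapHalves := fun p => by
    simp only [swapHalves, splice_splice]
  calc ∑ x, ∑ y, mulCoeff k x y • F (splice k (fun j => idx1 k y 1 * x j) y)
      = ∑ y, ∑ x, mirrorCoeff k x y • F (splice k x y) := by
        rw [sum_comm]
        refine sum_congr rfl fun y _ => ?_
        simp only [mulCoeff_eq_mirrorCoeff]
        exact Fintype.sum_equiv (Equiv.mulLeft fun _ => idx1 k y 1) _ _ fun _ => rfl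
    _ = ∑ x, ∑ y, mirrorCoeff k (splice k x y) (splice k y x) • F x := by
        rw [← Fintype.sum_prod_type', ← Fintype.sum_prod_type']
        refine Fintype.sum_equiv hswap.toPerm _ _ fun p => ?_
        simp only [Function.Involutive.coe_toPerm, swapHalves, splice_splice]
    _ = ((Fintype.card Γ : ℂ) ^ (k / 2)) • ∑ z, F z := by
        simp only [← sum_smul, sum_mirrorCoeff_splice, smul_sum]

end Counting

section Bilinear

variable {H : Type*} [Group H] [Fintype H] [DecidableEq H] (k : ℕ)

theorem mulAk_eq_linearCombination (a b : (Fin (k - 1) → H) →₀ ℂ) :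
    mulAk k a b =
      Finsupp.linearCombination ℂ (fun x => Finsupp.linearCombination ℂ (basisMul k x)) a b := by
  simp [mulAk, Finsupp.linearCombination_apply, Finsupp.smul_sum, mul_smul]

theorem mulAk_sum_left {ι : Type*} (s : Finset ι) (a : ι → (Fin (k - 1) → H) →₀ ℂ)
    (b : (Fin (k - 1) → H) →₀ ℂ) : mulAk k (∑ i ∈ s, a i) b = ∑ i ∈ s, mulAk k (a i) b := by
  simp only [mulAk_eq_linearCombination, map_sum, LinearMap.sum_apply]

theorem mulAk_sum_right {ι : Type*} (a : (Fin (k - 1) → H) →₀ ℂ) (s : Finset ι)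
    (b : ι → (Fin (k - 1) → H) →₀ ℂ) : mulAk k a (∑ i ∈ s, b i) = ∑ i ∈ s, mulAk k a (b i) := by
  simp only [mulAk_eq_linearCombination, map_sum]

theorem mulAk_single_single (x y : Fin (k - 1) → H) :
    mulAk k (Finsupp.single x 1) (Finsupp.single y 1) = basisMul k x y := by
  simp only [mulAk_eq_linearCombination, Finsupp.linearCombination_single, one_smul]

end Bilinear

section SemidirectProduct

variable {G Θ : Type*} [Group G] [Group Θ] (φ : Θ →* MulAut G)

theorem sdp_mk_mul_mk (θ θ' c γ : Θ) (a b : G) :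
    (⟨φ θ' a, c⟩ : G ⋊[φ] Θ) * ⟨φ θ b, γ⟩ = ⟨φ θ' (a * φ (θ'⁻¹ * c * θ) b), c * γ⟩ := by
  ext
  · show φ θ' a * φ c (φ θ b) = φ θ' (a * φ (θ'⁻¹ * c * θ) b)
    simp [MulAut.mul_apply]
  · rfl

theorem sdp_mk_eq_mk_iff (θ' : Θ) (a b : G) (c d : Θ) :
    (⟨φ θ' a, c⟩ : G ⋊[φ] Θ) = ⟨φ θ' b, d⟩ ↔ a = b ∧ c = d := by
  simp [SemidirectProduct.ext_iff]

end SemidirectProduct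

variable {G Θ : Type*} [Group G] [Fintype G] [DecidableEq G]
  [Group Θ] [Fintype Θ] [DecidableEq Θ] (φ : Θ →* MulAut G)

/-- The underlying equivalence `G ⋊[φ] Θ ≃ G × Θ`. -/
def sdpEquivProd : (G ⋊[φ] Θ) ≃ G × Θ where
  toFun s := (s.left, s.right)
  invFun p := ⟨p.1, p.2⟩
  left_inv _ := rfl
  right_inv _ := rfl

instance : Fintype (G ⋊[φ] Θ) := Fintype.ofEquiv (G × Θ) (sdpEquivProd φ).symm

instance : DecidableEq (G ⋊[φ] Θ) := (sdpEquivProd φ).decidableEq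

/-- `U(ḡ) = Σ_{θ∈Θ} Σ_{γ̄∈Θ^{k−1}} S((θ(g₁),γ₁),…,(θ(g_{k−1}),γ_{k−1})) ∈ A_k(G⋊Θ)`. -/
def Uel (k : ℕ) (g : Fin (k - 1) → G) : (Fin (k - 1) → G ⋊[φ] Θ) →₀ ℂ :=
  ∑ θ : Θ, ∑ γ : Fin (k - 1) → Θ,
    Finsupp.single (fun j => (⟨φ θ (g j), γ j⟩ : G ⋊[φ] Θ)) (1 : ℂ)

theorem basisMul_sdp (k : ℕ) (g h : Fin (k - 1) → G) (θ θ' : Θ) (γ γ' : Fin (k - 1) → Θ) :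
    basisMul k (fun j => (⟨φ θ (g j), γ j⟩ : G ⋊[φ] Θ)) (fun j => ⟨φ θ' (h j), γ' j⟩) =
      (basisMulConst k (G ⋊[φ] Θ) *
          mulCoeff k (fun j => φ (θ'⁻¹ * idx1 k γ' 1 * θ) (g j)) h) •
        mulCoeff k γ γ' • Finsupp.single (fun j => (⟨φ θ'
            (splice k (fun j => idx1 k h 1 * φ (θ'⁻¹ * idx1 k γ' 1 * θ) (g j)) h j),
          splice k (fun j => idx1 k γ' 1 * γ j) γ' j⟩ : G ⋊[φ] Θ)) 1 := by
  have hmk : ∀ (θ : Θ) (u : Fin (k - 1) → G) (w : Fin (k - 1) → Θ) (n : ℕ),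
      idx1 k (fun j => (⟨φ θ (u j), w j⟩ : G ⋊[φ] Θ)) n = ⟨φ θ (idx1 k u n), idx1 k w n⟩ :=
    fun θ u w n => idx1_map₂ k (fun a b => (⟨φ θ a, b⟩ : G ⋊[φ] Θ)) (by ext <;> simp) u w n
  rw [basisMul_eq, smul_smul, mul_assoc]
  congr 2
  · simp only [mulCoeff, ← prod_mul_distrib, hmk, sdp_mk_mul_mk, sdp_mk_eq_mk_iff,
      idx1_map k _ (map_one _), ite_zero_mul_ite_zero, mul_one]
  · funext j
    simp only [splice, hmk]
    split_ifs
    · exact sdp_mk_mul_mk φ _ _ _ _ _ _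
    · rfl

theorem mulAk_Uel_single (k : ℕ) (g h : Fin (k - 1) → G) (θ' : Θ) (γ' : Fin (k - 1) → Θ) :
    mulAk k (Uel φ k g) (Finsupp.single (fun j => ⟨φ θ' (h j), γ' j⟩) 1) =
      ∑ θ'', (basisMulConst k (G ⋊[φ] Θ) * mulCoeff k (fun j => φ θ'' (g j)) h) •
        ∑ γ, mulCoeff k γ γ' • Finsupp.single (fun j => (⟨φ θ'
            (splice k (fun j => idx1 k h 1 * φ θ'' (g j)) h j),
          splice k (fun j => idx1 k γ' 1 * γ j) γ' j⟩ : G ⋊[φ] Θ)) 1 := by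
  simp only [Uel, mulAk_sum_left, mulAk_single_single, basisMul_sdp, ← smul_sum]
  exact Fintype.sum_equiv (Equiv.mulLeft (θ'⁻¹ * idx1 k γ' 1)) _ _ fun _ => rfl

theorem mulAk_Uel_Uel (k : ℕ) (g h : Fin (k - 1) → G) :
    mulAk k (Uel φ k g) (Uel φ k h) =
      ∑ θ'', (basisMulConst k (G ⋊[φ] Θ) * (Fintype.card Θ : ℂ) ^ (k / 2) *
          mulCoeff k (fun j => φ θ'' (g j)) h) •
        Uel φ k (splice k (fun j => idx1 k h 1 * φ θ'' (g j)) h) := by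
  simp only [Uel.eq_1 φ k h, mulAk_sum_right, mulAk_Uel_single]
  refine (sum_congr rfl fun θ' _ => sum_comm).trans
    (sum_comm.trans (sum_congr rfl fun θ'' _ => ?_))
  set W := splice k (fun j => idx1 k h 1 * φ θ'' (g j)) h
  rw [Uel, smul_sum]
  refine sum_congr rfl fun θ' _ => ?_
  rw [← smul_sum, sum_comm, sum_sum_mulCoeff_smul k fun ε =>
    Finsupp.single (fun j => (⟨φ θ' (W j), ε j⟩ : G ⋊[φ] Θ)) 1, smul_smul, mul_right_comm]

theorem Uel_mul (k : ℕ) (g h : Fin (k - 1) → G) :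
    mulAk k (Uel φ k g) (Uel φ k h) =
      ((((Fintype.card G : ℝ) ^ (((((k + 1) / 2 : ℕ) : ℝ) - 1) / 2) *
          (Fintype.card Θ : ℝ) ^ (((((k + 1) / 2 : ℕ) : ℝ) - 1) / 2) *
          (Fintype.card Θ : ℝ) ^ (k / 2 : ℕ) : ℝ) : ℂ) •
        ∑ θ'' : Θ,
          (∏ i ∈ Finset.Icc 2 ((k + 1) / 2),
            (if idx1 k h 1 * φ θ'' (idx1 k g (k + 1 - i)) = idx1 k h i
              then (1 : ℂ) else 0)) •
          Uel φ k (fun j : Fin (k - 1) =>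
            if (j : ℕ) + 1 ≤ (k + 1) / 2 then idx1 k h 1 * φ θ'' (g j) else h j)) := by
  have hconst : basisMulConst k (G ⋊[φ] Θ) * (Fintype.card Θ : ℂ) ^ (k / 2) =
      (((Fintype.card G : ℝ) ^ (((((k + 1) / 2 : ℕ) : ℝ) - 1) / 2) *
        (Fintype.card Θ : ℝ) ^ (((((k + 1) / 2 : ℕ) : ℝ) - 1) / 2) *
        (Fintype.card Θ : ℝ) ^ (k / 2 : ℕ) : ℝ) : ℂ) := by
    rw [basisMulConst, Fintype.card_congr (sdpEquivProd φ), Fintype.card_prod, Nat.cast_mul,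
      Real.mul_rpow (by positivity) (by positivity)]
    push_cast
    ring
  rw [mulAk_Uel_Uel, smul_sum]
  refine sum_congr rfl fun θ'' _ => ?_
  rw [smul_smul, hconst, mulCoeff]
  simp only [idx1_map k _ (map_one _)]
  rfl

end
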